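/- arXiv:2107.12594 — 2 statements merged into one kernel-verified Lean document; each statement's English description precedes it below -/
import Mathlib

section
/- Let m ≥ 1, let d be an integer with 1 ≤ d ≤ q^m, and let s be an integer with 0 ≤ s ≤ m(q-1). Then RM_q(s,m) ⊆ Hyp_q(d,m) if and only if s ≤ (m-c)(q-1) + q - ⌈d/q^{c-1}⌉, where c = ⌈log_q(d)⌉. -/
open MvPolynomial Finset Pointwise

noncomputable section

/-- Evaluation of a multivariate polynomial at all points of `F^m`. -/
def evalPt {F : Type} [Field F] {m : ℕ} (f : MvPolynomial (Fin m) F) : (Fin m → F) → F :=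
  fun P => MvPolynomial.eval P f

/-- The monomial code `C_A = ev(F_q[A])`, the evaluations of the polynomials
whose monomial support is contained in `A`. -/
def monomialCode (F : Type) [Field F] (m : ℕ) (A : Set (Fin m →₀ ℕ)) :
    Set ((Fin m → F) → F) :=
  { v | ∃ f : MvPolynomial (Fin m) F, (↑f.support : Set (Fin m →₀ ℕ)) ⊆ A ∧ v = evalPt f }

/-- Exponent set of the Reed–Muller code `RM_q(s,m)` (empty when `s < 0`). -/
def RMset (q m : ℕ) (s : ℤ) : Set (Fin m →₀ ℕ) :=
  { i | (∀ j, i j < q) ∧ (∑ j, (i j : ℤ)) ≤ s }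

/-- Exponent set of the hyperbolic code `Hyp_q(d,m)`. -/
def Hypset (q m d : ℕ) : Set (Fin m →₀ ℕ) :=
  { i | (∀ j, i j < q) ∧ d ≤ ∏ j, (q - i j) }

/-- Exponent set of the cube code `Cube_q(s,m)`. -/
def Cubeset (m s : ℕ) : Set (Fin m →₀ ℕ) :=
  { i | ∀ j, i j ≤ s }

/-- Minimum distance of a code: least Hamming weight of a nonzero codeword. -/
def minDist {F : Type} [Field F] [Fintype F] [DecidableEq F] {m : ℕ}
    (C : Set ((Fin m → F) → F)) : ℕ :=
  sInf { w | ∃ v ∈ C, v ≠ 0 ∧ hammingNorm v = w }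

/-- Hamming distance from a word to a code. -/
def distToCode {F : Type} [Field F] [Fintype F] [DecidableEq F] {m : ℕ}
    (y : (Fin m → F) → F) (C : Set ((Fin m → F) → F)) : ℕ :=
  sInf { w | ∃ c ∈ C, hammingDist y c = w }

/-- `i`-fold Minkowski sum of `H` with itself (`0`-fold sum is `{0}`). -/
def iMink {m : ℕ} (H : Set (Fin m →₀ ℕ)) : ℕ → Set (Fin m →₀ ℕ)
  | 0 => {0}
  | i + 1 => iMink H i + H

/-- The sets `L(d,r,i)` from the Geil–Matsumoto list-decoding algorithm. -/
def Lset (q m d r i : ℕ) : Set (Fin m →₀ ℕ) :=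
  { a | (∀ j, a j < q) ∧ ∀ x ∈ iMink (Hypset q m d) i, a + x ∈ Hypset q m (r + 1) }

/-!
Evaluation is injective on polynomials of degree `< q` in every variable, so the inclusion of
monomial codes is the inclusion of exponent sets. Writing `a j = q - i j ∈ [1, q]`, it asks that
`∏ a j ≥ d` whenever `∑ (a j - 1) ≥ m (q - 1) - s`. Moving excess between factors shows that the
least such product is `q ^ k (1 + r)`, where `m (q - 1) - s = k (q - 1) + r` with `r < q - 1`;
comparing it with `d`, which satisfies `q ^ (c - 1) < d ≤ q ^ c`, gives the bound.
-/

/-- The least value of `∏ j, a j` over `a j ∈ [1, q]` with `∑ j, (a j - 1) = e`: as many factors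
as possible equal `q`, one factor takes the remainder. -/
def minProd (q e : ℕ) : ℕ := q ^ (e / (q - 1)) * (1 + e % (q - 1))

theorem minProd_mul_add {q : ℕ} (hq : 1 < q) (k : ℕ) {t : ℕ} (ht : t ≤ q - 1) :
    minProd q (k * (q - 1) + t) = q ^ k * (1 + t) := by
  have hq1 : 0 < q - 1 := by omega
  rcases ht.lt_or_eq with ht | rfl
  · rw [minProd, Nat.mul_add_mod_self_right, Nat.mod_eq_of_lt ht, mul_comm k,
      Nat.mul_add_div hq1, Nat.div_eq_of_lt ht, add_zero]
  · rw [minProd, ← Nat.succ_mul, Nat.mul_div_cancel _ hq1, Nat.mul_mod_left, pow_succ,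
      Nat.add_sub_cancel' hq.le, add_zero, mul_one]

theorem minProd_of_lt {q e : ℕ} (hq : 1 < q) (he : e < q - 1) : minProd q e = 1 + e := by
  simpa using minProd_mul_add hq 0 he.le

theorem minProd_add_sub_one {q : ℕ} (hq : 1 < q) (e : ℕ) :
    minProd q (e + (q - 1)) = q * minProd q e := by
  have hr : e % (q - 1) ≤ q - 1 := (Nat.mod_lt _ (by omega)).le
  conv_lhs => rw [← Nat.div_add_mod' e (q - 1), add_right_comm, ← Nat.succ_mul,
    minProd_mul_add hq _ hr, pow_succ]
  rw [minProd]
  ring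

theorem minProd_mono {q : ℕ} (hq : 1 < q) : Monotone (minProd q) := by
  refine monotone_nat_of_le_succ fun e => ?_
  have hr : e % (q - 1) < q - 1 := Nat.mod_lt _ (by omega)
  have he : e = e / (q - 1) * (q - 1) + e % (q - 1) := (Nat.div_add_mod' e (q - 1)).symm
  rw [he, add_assoc, minProd_mul_add hq _ hr.le, minProd_mul_add hq _ hr]
  gcongr
  omega

/-- The exchange step behind the minimum: `q (x + y - q) ≤ x y` for `x, y ≤ q`. -/
theorem minProd_add_le {q : ℕ} (hq : 1 < q) (e : ℕ) {t : ℕ} (ht : t ≤ q - 1) :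
    minProd q (e + t) ≤ minProd q e * (1 + t) := by
  set k := e / (q - 1)
  set r := e % (q - 1)
  have hr : r < q - 1 := Nat.mod_lt _ (by omega)
  have he : e = k * (q - 1) + r := (Nat.div_add_mod' e (q - 1)).symm
  rw [he, minProd_mul_add hq _ hr.le]
  by_cases hrt : r + t ≤ q - 1
  · rw [add_assoc, minProd_mul_add hq _ hrt, mul_assoc]
    gcongr
    nlinarith
  · obtain ⟨u, hu⟩ : ∃ u, r + t = (q - 1) + u := ⟨r + t - (q - 1), by omega⟩
    rw [add_assoc, hu, ← add_assoc, ← Nat.succ_mul, minProd_mul_add hq _ (by omega), pow_succ,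
      mul_assoc, mul_assoc]
    refine Nat.mul_le_mul_left _ ?_
    have hexchange : 0 ≤ ((q : ℤ) - (r + 1)) * ((q : ℤ) - (t + 1)) :=
      mul_nonneg (by omega) (by omega)
    have hu' : (r : ℤ) + t + 1 = q + u := by omega
    zify
    nlinarith

theorem minProd_le_prod {q : ℕ} (hq : 1 < q) {m : ℕ} (i : Fin m → ℕ) (hi : ∀ j, i j < q) :
    minProd q (∑ j, (q - 1 - i j)) ≤ ∏ j, (q - i j) := by
  induction m with
  | zero => simp [minProd]
  | succ m ih =>
    rw [Fin.sum_univ_castSucc, Fin.prod_univ_castSucc]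
    calc minProd q (∑ j : Fin m, (q - 1 - i j.castSucc) + (q - 1 - i (Fin.last m)))
        ≤ minProd q (∑ j : Fin m, (q - 1 - i j.castSucc)) * (1 + (q - 1 - i (Fin.last m))) :=
          minProd_add_le hq _ (Nat.sub_le _ _)
      _ ≤ (∏ j : Fin m, (q - i j.castSucc)) * (q - i (Fin.last m)) := by
          gcongr
          · exact ih _ fun j => hi _
          · have := hi (Fin.last m)
            omega

theorem exists_prod_eq_minProd {q : ℕ} (hq : 1 < q) {m e : ℕ} (he : e ≤ m * (q - 1)) :
    ∃ i : Fin m → ℕ, (∀ j, i j < q) ∧ ∑ j, (q - 1 - i j) = e ∧ ∏ j, (q - i j) = minProd q e := by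
  induction m generalizing e with
  | zero =>
    obtain rfl : e = 0 := by simpa using he
    exact ⟨Fin.elim0, fun j => j.elim0, by simp, by simp [minProd]⟩
  | succ m ih =>
    by_cases hqe : q - 1 ≤ e
    · obtain ⟨i, hi, hsum, hprod⟩ := ih (e := e - (q - 1)) (by rw [Nat.succ_mul] at he; omega)
      refine ⟨Fin.snoc i 0, Fin.lastCases (by simpa using hq.pos) (by simpa using hi), ?_, ?_⟩
      · simp only [Fin.sum_univ_castSucc, Fin.snoc_castSucc, hsum, Fin.snoc_last, tsub_zero]
        omega
      · rw [Fin.prod_univ_castSucc, ← Nat.sub_add_cancel hqe, minProd_add_sub_one hq]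
        simp [hprod, mul_comm]
    · obtain ⟨i, hi, hsum, hprod⟩ := ih (e := 0) (Nat.zero_le _)
      refine ⟨Fin.snoc i (q - 1 - e), Fin.lastCases (by simp only [Fin.snoc_last]; omega)
        (by simpa using hi), ?_, ?_⟩
      · simp only [Fin.sum_univ_castSucc, Fin.snoc_castSucc, hsum, Fin.snoc_last, zero_add]
        omega
      · rw [Fin.prod_univ_castSucc, minProd_of_lt hq (by omega)]
        simp only [Fin.snoc_castSucc, hprod, minProd_of_lt hq (by omega : 0 < q - 1),
          Fin.snoc_last, add_zero, one_mul]
        omega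

theorem sum_sub_one_sub_add_sum {q m : ℕ} (i : Fin m → ℕ) (hi : ∀ j, i j < q) :
    ∑ j, (q - 1 - i j) + ∑ j, i j = m * (q - 1) := by
  rw [← Finset.sum_add_distrib, Finset.sum_congr rfl fun j _ => Nat.sub_add_cancel
    (Nat.le_sub_one_of_lt (hi j))]
  simp

theorem RMset_subset_Hypset_iff {q m s d : ℕ} (hq : 1 < q) (hs : s ≤ m * (q - 1)) :
    RMset q m s ⊆ Hypset q m d ↔ d ≤ minProd q (m * (q - 1) - s) := by
  constructor
  · intro hsub
    obtain ⟨i, hi, hsum, hprod⟩ := exists_prod_eq_minProd hq (Nat.sub_le (m * (q - 1)) s)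
    have hsum_i : ∑ j, i j = s := by have := sum_sub_one_sub_add_sum i hi; omega
    have hmem : Finsupp.equivFunOnFinite.symm i ∈ RMset q m s :=
      ⟨by simpa using hi, by simp [← hsum_i]⟩
    simpa [hprod] using (hsub hmem).2
  · rintro hd i ⟨hi, hsum⟩
    refine ⟨hi, hd.trans <| (minProd_mono hq ?_).trans (minProd_le_prod hq i hi)⟩
    have := sum_sub_one_sub_add_sum i hi
    have : ∑ j, i j ≤ s := by exact_mod_cast hsum
    omega

/-- The hypotheses say `q ^ (c - 1) < d ≤ q ^ c` and `D = ⌈d / q ^ (c - 1)⌉`, multiplied by `q`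
to stay in `ℕ`. -/
theorem le_minProd_iff {q c d D : ℕ} (hq : 1 < q) (hlt : q ^ c < d * q) (hle : d ≤ q ^ c)
    (hDlt : q ^ c * (D - 1) < d * q) (hDle : d * q ≤ q ^ c * D) (e : ℕ) :
    d ≤ minProd q e ↔ c * (q - 1) + D ≤ e + q := by
  have hD2 : 2 ≤ D := by
    by_contra h
    have : q ^ c * D ≤ q ^ c * 1 := Nat.mul_le_mul_left _ (by omega)
    omega
  have hDq : D ≤ q := by
    by_contra h
    have : q ^ c * q ≤ q ^ c * (D - 1) := Nat.mul_le_mul_left _ (by omega)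
    have : d * q ≤ q ^ c * q := Nat.mul_le_mul_right _ hle
    omega
  have hN : minProd q (c * (q - 1) + (D - 1)) = q ^ c * D := by
    rw [minProd_mul_add hq _ (by omega), Nat.add_sub_cancel' (by omega)]
  have hN1 : minProd q (c * (q - 1) + (D - 2)) = q ^ c * (D - 1) := by
    rw [minProd_mul_add hq _ (by omega)]
    congr 1
    omega
  rw [← Nat.mul_le_mul_right_iff (by omega : 0 < q), mul_comm (minProd q e),
    ← minProd_add_sub_one hq]
  constructor
  · intro h
    by_contra hlt'
    have := minProd_mono hq (show e + (q - 1) ≤ c * (q - 1) + (D - 2) by omega)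
    omega
  · intro h
    exact hDle.trans (hN ▸ minProd_mono hq (by omega))

theorem exists_natCast_eq_ceil_logb {q d : ℕ} (hq : 1 < q) (hd : 1 ≤ d) :
    ∃ c : ℕ, (c : ℤ) = ⌈Real.logb q d⌉ ∧ q ^ c < d * q ∧ d ≤ q ^ c := by
  have hq' : (1 : ℝ) < q := by exact_mod_cast hq
  have hd' : (0 : ℝ) < d := by positivity
  have hlog : 0 ≤ Real.logb q d := Real.logb_nonneg hq' (by exact_mod_cast hd)
  set c := ⌈Real.logb q d⌉.toNat
  have hc : (c : ℤ) = ⌈Real.logb q d⌉ := Int.toNat_of_nonneg (Int.ceil_nonneg hlog)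
  have hlt : (c : ℝ) - 1 < Real.logb q d := by
    have := Int.ceil_lt_add_one (Real.logb q d)
    rw [← hc] at this
    push_cast at this
    linarith
  have hle : Real.logb q d ≤ c := by exact_mod_cast hc ▸ Int.le_ceil (Real.logb q d)
  rw [Real.lt_logb_iff_rpow_lt hq' hd', Real.rpow_sub_one (by positivity), Real.rpow_natCast,
    div_lt_iff₀ (by positivity)] at hlt
  rw [Real.logb_le_iff_le_rpow hq' hd', Real.rpow_natCast] at hle
  exact ⟨c, hc, by exact_mod_cast hlt, by exact_mod_cast hle⟩

theorem exists_natCast_eq_ceil_div {x y : ℕ} (hx : 0 < x) (hy : 0 < y) :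
    ∃ D : ℕ, ⌈(x : ℝ) / y⌉ = D ∧ y * (D - 1) < x ∧ x ≤ y * D := by
  have hxy : (0 : ℝ) < x / y := by positivity
  set D := ⌈(x : ℝ) / y⌉₊
  have hD : 0 < D := Nat.ceil_pos.mpr hxy
  have hlt := Nat.ceil_lt_add_one hxy.le
  have hle := Nat.le_ceil ((x : ℝ) / y)
  rw [← sub_lt_iff_lt_add, lt_div_iff₀ (by positivity)] at hlt
  rw [div_le_iff₀ (by positivity)] at hle
  refine ⟨D, (Int.natCast_ceil_eq_ceil hxy.le).symm, ?_, ?_⟩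
  · rw [mul_comm]
    exact_mod_cast (show (((D - 1 : ℕ) : ℝ)) * y < x by push_cast [Nat.cast_sub hD]; exact hlt)
  · rw [mul_comm]
    exact_mod_cast hle

theorem mem_restrictDegree_of_support_subset {F : Type} [Field F] [Fintype F] {m : ℕ}
    {A : Set (Fin m →₀ ℕ)} (hA : ∀ i ∈ A, ∀ j, i j < Fintype.card F)
    {f : MvPolynomial (Fin m) F} (hf : (↑f.support : Set (Fin m →₀ ℕ)) ⊆ A) :
    f ∈ restrictDegree (Fin m) F (Fintype.card F - 1) :=
  (mem_restrictDegree _ _ _).2 fun i hi j => Nat.le_sub_one_of_lt (hA i (hf hi) j)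

theorem eq_of_evalPt_eq {F : Type} [Field F] [Fintype F] {m : ℕ}
    {f g : MvPolynomial (Fin m) F} (hf : f ∈ restrictDegree (Fin m) F (Fintype.card F - 1))
    (hg : g ∈ restrictDegree (Fin m) F (Fintype.card F - 1)) (h : evalPt f = evalPt g) :
    f = g :=
  sub_eq_zero.1 <| eq_zero_of_eval_eq_zero _ _ _
    (fun v => by rw [map_sub, sub_eq_zero]; exact congrFun h v) (sub_mem hf hg)

theorem monomialCode_subset_monomialCode_iff {F : Type} [Field F] [Fintype F] {m : ℕ}
    {A B : Set (Fin m →₀ ℕ)} (hA : ∀ i ∈ A, ∀ j, i j < Fintype.card F)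
    (hB : ∀ i ∈ B, ∀ j, i j < Fintype.card F) :
    monomialCode F m A ⊆ monomialCode F m B ↔ A ⊆ B := by
  refine ⟨fun h i hi => ?_, fun h v ⟨f, hf, hv⟩ => ⟨f, hf.trans h, hv⟩⟩
  have hmon : (↑(monomial i (1 : F)).support : Set (Fin m →₀ ℕ)) ⊆ A := by
    classical
    rw [support_monomial, if_neg one_ne_zero, Finset.coe_singleton]
    exact Set.singleton_subset_iff.2 hi
  obtain ⟨g, hg, hev⟩ := h ⟨monomial i 1, hmon, rfl⟩
  obtain rfl : monomial i 1 = g := eq_of_evalPt_eq (mem_restrictDegree_of_support_subset hA hmon)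
    (mem_restrictDegree_of_support_subset hB hg) hev
  exact hg (by simp)

theorem statement8_general (F : Type) [Field F] [Fintype F]
    (q m d s : ℕ) (hq : Fintype.card F = q) (hd1 : 1 ≤ d)
    (hs : s ≤ m * (q - 1)) (c : ℤ) (hc : c = ⌈Real.logb q d⌉) :
    monomialCode F m (RMset q m (s : ℤ)) ⊆ monomialCode F m (Hypset q m d) ↔
      (s : ℤ) ≤ ((m : ℤ) - c) * ((q : ℤ) - 1) + (q : ℤ) - ⌈(d : ℝ) / (q : ℝ) ^ (c - 1)⌉ := by
  have hq1 : 1 < q := hq ▸ Fintype.one_lt_card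
  obtain ⟨c', hc', hlt, hle⟩ := exists_natCast_eq_ceil_logb hq1 hd1
  rw [hc, ← hc']
  obtain ⟨D, hD, hDlt, hDle⟩ := exists_natCast_eq_ceil_div (x := d * q) (y := q ^ c')
    (by positivity) (by positivity)
  have hdiv : (d : ℝ) / (q : ℝ) ^ ((c' : ℤ) - 1) = ((d * q : ℕ) : ℝ) / ((q ^ c' : ℕ) : ℝ) := by
    rw [zpow_sub_one₀ (by positivity), zpow_natCast]
    push_cast
    field_simp
  subst hq
  rw [monomialCode_subset_monomialCode_iff (fun i hi => hi.1) (fun i hi => hi.1),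
    RMset_subset_Hypset_iff hq1 hs, le_minProd_iff hq1 hlt hle hDlt hDle, hdiv, hD]
  zify [hs, hq1.le]
  constructor <;> intro h <;> linarith

/-- `RM_q(s,m) ⊆ Hyp_q(d,m)` iff `s ≤ (m-c)(q-1) + q - ⌈d/q^{c-1}⌉`,
where `c = ⌈log_q d⌉`. -/
theorem statement8 (F : Type) [Field F] [Fintype F] [DecidableEq F]
    (q m d s : ℕ) (hq : Fintype.card F = q) (hm : 1 ≤ m) (hd1 : 1 ≤ d) (hd2 : d ≤ q ^ m)
    (hs : s ≤ m * (q - 1)) (c : ℤ) (hc : c = ⌈Real.logb q d⌉) :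
    monomialCode F m (RMset q m (s : ℤ)) ⊆ monomialCode F m (Hypset q m d) ↔
      (s : ℤ) ≤ ((m : ℤ) - c) * ((q : ℤ) - 1) + (q : ℤ) - ⌈(d : ℝ) / (q : ℝ) ^ (c - 1)⌉ :=
  statement8_general F q m d s hq hd1 hs c hc
end
end

section
/- Let m ≥ 1, let s be an integer with 0 ≤ s ≤ q-1, and set t_RS = ⌊(q-s-1)/2⌋. Then any word can be uniquely decoded in Cube_q(s,m) up to (t_RS+1)^m - 1 errors: if c_1, c_2 ∈ Cube_q(s,m) and y ∈ F_q^n satisfy d_H(y,c_1) ≤ (t_RS+1)^m - 1 and d_H(y,c_2) ≤ (t_RS+1)^m - 1, then c_1 = c_2. -/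
open MvPolynomial Finset Pointwise

noncomputable section

/-!
Two distinct codewords of the cube code are evaluations of polynomials whose difference `h` is
nonzero with every partial degree at most `s`, so `h` has at least `(q - s)^m` non-zeros:
writing `h` as a polynomial in the first variable, above each of the at least `(q - s)^(m-1)`
non-zeros of its leading coefficient the univariate slice is a nonzero polynomial of degree
`≤ s`, hence has at least `q - s` non-zeros. Since `2 (t + 1) ≤ q - s + 1` gives
`2 ((t + 1)^m - 1) < (q - s)^m`, the triangle inequality forbids two distinct codewords
within `(t + 1)^m - 1` of the same word.
-/

theorem two_mul_pow_le_pow_add_one {a d : ℕ} (h : 2 * a ≤ d + 1) :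
    ∀ m : ℕ, 2 * a ^ m ≤ d ^ m + 1
  | 0 => by simp
  | m + 1 => by
    have ih := two_mul_pow_le_pow_add_one h m
    rcases Nat.eq_zero_or_pos a with rfl | ha
    · simp
    have hd : 1 ≤ d ^ m := Nat.one_le_pow _ _ (by omega)
    have had : a - 1 ≤ (d - a) * d ^ m := le_trans (by omega) (Nat.le_mul_of_pos_right _ hd)
    have hsplit : d ^ (m + 1) = a * d ^ m + (d - a) * d ^ m := by
      rw [← add_mul, Nat.add_sub_cancel' (by omega), pow_succ, mul_comm]
    calc 2 * a ^ (m + 1) = a * (2 * a ^ m) := by ring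
      _ ≤ a * (d ^ m + 1) := Nat.mul_le_mul_left a ih
      _ = a * d ^ m + a := by ring
      _ ≤ d ^ (m + 1) + 1 := by rw [hsplit]; omega

theorem Fin.card_filter_univ_eq_sum_card_filter_cons {α : Type*} [Fintype α] {n : ℕ}
    (P : (Fin (n + 1) → α) → Prop) [DecidablePred P] :
    #{x | P x} = ∑ xₜ : Fin n → α, #{a | P (Fin.cons a xₜ)} := by
  simp only [Finset.card_filter]
  rw [← (Fin.consEquiv fun _ ↦ α).sum_comp, Fintype.sum_prod_type_right]
  rfl

section Counting

variable {R : Type*} [CommRing R] [IsDomain R] [Fintype R] [DecidableEq R]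

theorem Polynomial.card_sub_natDegree_le_card_eval_ne_zero {p : Polynomial R} (hp : p ≠ 0) :
    Fintype.card R - p.natDegree ≤ #{x | p.eval x ≠ 0} := by
  have hroots : #{x | p.eval x = 0} ≤ p.natDegree :=
    Polynomial.card_le_degree_of_subset_roots fun x hx ↦ by
      simpa [Polynomial.mem_roots hp] using hx
  have := Finset.card_filter_add_card_filter_not (s := Finset.univ) (fun x ↦ p.eval x = 0)
  rw [Finset.card_univ] at this
  simp only [ne_eq]
  omega

theorem MvPolynomial.card_sub_pow_le_card_eval_ne_zero {s n : ℕ} {p : MvPolynomial (Fin n) R}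
    (hp : p ≠ 0) (hdeg : ∀ i, p.degreeOf i ≤ s) :
    (Fintype.card R - s) ^ n ≤ #{x | eval x p ≠ 0} := by
  induction n with
  | zero =>
    refine Finset.card_pos.2 ⟨isEmptyElim, mem_filter.2 ⟨mem_univ _, ?_⟩⟩
    rw [p.eq_C_of_isEmpty, Ne, C_eq_zero] at hp
    rwa [p.eq_C_of_isEmpty, eval_C]
  | succ n ih =>
    set p' := finSuccEquiv R n p
    set pₖ := p'.leadingCoeff
    have hp' : p' ≠ 0 := EmbeddingLike.map_ne_zero_iff.2 hp
    have hpₖ : pₖ ≠ 0 := Polynomial.leadingCoeff_ne_zero.2 hp'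
    specialize ih hpₖ fun j ↦ (degreeOf_coeff_finSuccEquiv p j _).trans (hdeg j.succ)
    have hfiber (xₜ : Fin n → R) (hxₜ : eval xₜ pₖ ≠ 0) :
        Fintype.card R - s ≤ #{a | eval (Fin.cons a xₜ) p ≠ 0} := by
      set pₓ := p'.map (eval xₜ)
      have hpₓ : pₓ ≠ 0 := Polynomial.leadingCoeff_ne_zero.1 <| by
        rwa [Polynomial.leadingCoeff_map_of_leadingCoeff_ne_zero _ hxₜ]
      have hpₓdeg : pₓ.natDegree ≤ s := by
        rw [Polynomial.natDegree_map_of_leadingCoeff_ne_zero _ hxₜ, natDegree_finSuccEquiv]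
        exact hdeg 0
      simp_rw [eval_eq_eval_mv_eval']
      exact (Nat.sub_le_sub_left hpₓdeg _).trans
        (Polynomial.card_sub_natDegree_le_card_eval_ne_zero hpₓ)
    calc (Fintype.card R - s) ^ (n + 1)
        = (Fintype.card R - s) ^ n * (Fintype.card R - s) := pow_succ _ _
      _ ≤ #{xₜ | eval xₜ pₖ ≠ 0} * (Fintype.card R - s) := by gcongr
      _ = ∑ xₜ with eval xₜ pₖ ≠ 0, (Fintype.card R - s) := by rw [sum_const, smul_eq_mul]
      _ ≤ ∑ xₜ with eval xₜ pₖ ≠ 0, #{a | eval (Fin.cons a xₜ) p ≠ 0} :=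
        sum_le_sum fun xₜ hxₜ ↦ hfiber xₜ (mem_filter.1 hxₜ).2
      _ ≤ ∑ xₜ, #{a | eval (Fin.cons a xₜ : Fin (n + 1) → R) p ≠ 0} :=
        sum_le_sum_of_subset (filter_subset _ _)
      _ = #{x | eval x p ≠ 0} :=
        (Fin.card_filter_univ_eq_sum_card_filter_cons fun x ↦ eval x p ≠ 0).symm

end Counting

theorem degreeOf_le_of_support_subset_Cubeset {R : Type*} [CommSemiring R] {m s : ℕ}
    {f : MvPolynomial (Fin m) R} (hf : (↑f.support : Set (Fin m →₀ ℕ)) ⊆ Cubeset m s)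
    (i : Fin m) : f.degreeOf i ≤ s :=
  degreeOf_le_iff.2 fun _ hd ↦ hf hd i

section CubeCode

variable {F : Type} [Field F] [Fintype F] [DecidableEq F] {m s : ℕ}

theorem hammingDist_evalPt (f g : MvPolynomial (Fin m) F) :
    hammingDist (evalPt f) (evalPt g) = #{x | eval x (f - g) ≠ 0} := by
  unfold hammingDist evalPt
  congr 1
  ext x
  simp only [mem_filter, mem_univ, true_and, map_sub, sub_ne_zero]

theorem card_sub_pow_le_hammingDist_of_mem_cubeCode {c₁ c₂ : (Fin m → F) → F}
    (hc₁ : c₁ ∈ monomialCode F m (Cubeset m s)) (hc₂ : c₂ ∈ monomialCode F m (Cubeset m s))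
    (hne : c₁ ≠ c₂) : (Fintype.card F - s) ^ m ≤ hammingDist c₁ c₂ := by
  obtain ⟨f, hf, rfl⟩ := hc₁
  obtain ⟨g, hg, rfl⟩ := hc₂
  rw [hammingDist_evalPt]
  refine card_sub_pow_le_card_eval_ne_zero (sub_ne_zero.2 ?_) fun i ↦ ?_
  · rintro rfl
    exact hne rfl
  · exact (degreeOf_sub_le i f g).trans <| max_le
      (degreeOf_le_of_support_subset_Cubeset hf i) (degreeOf_le_of_support_subset_Cubeset hg i)

end CubeCode

theorem statement14_general (F : Type) [Field F] [Fintype F] [DecidableEq F]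
    (q m s : ℕ) (hq : Fintype.card F = q) (hs : s ≤ q - 1)
    (t : ℕ) (ht : t = (q - s - 1) / 2)
    (c₁ c₂ y : (Fin m → F) → F)
    (hc₁ : c₁ ∈ monomialCode F m (Cubeset m s))
    (hc₂ : c₂ ∈ monomialCode F m (Cubeset m s))
    (h₁ : hammingDist y c₁ ≤ (t + 1) ^ m - 1)
    (h₂ : hammingDist y c₂ ≤ (t + 1) ^ m - 1) :
    c₁ = c₂ := by
  by_contra hne
  have hq_pos : 0 < q := hq ▸ Fintype.card_pos
  have hdist := card_sub_pow_le_hammingDist_of_mem_cubeCode hc₁ hc₂ hne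
  rw [hq] at hdist
  have htriangle := hammingDist_triangle_left c₁ c₂ y
  have hpow := two_mul_pow_le_pow_add_one (a := t + 1) (d := q - s) (by omega) m
  have hpow_pos : 1 ≤ (t + 1) ^ m := Nat.one_le_pow _ _ t.succ_pos
  omega

/-- with `t_RS = ⌊(q-s-1)/2⌋`, unique decoding in `Cube_q(s,m)` up to
`(t_RS+1)^m - 1` errors. -/
theorem statement14 (F : Type) [Field F] [Fintype F] [DecidableEq F]
    (q m s : ℕ) (hq : Fintype.card F = q) (hm : 1 ≤ m) (hs : s ≤ q - 1)
    (t : ℕ) (ht : t = (q - s - 1) / 2)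
    (c₁ c₂ y : (Fin m → F) → F)
    (hc₁ : c₁ ∈ monomialCode F m (Cubeset m s))
    (hc₂ : c₂ ∈ monomialCode F m (Cubeset m s))
    (h₁ : hammingDist y c₁ ≤ (t + 1) ^ m - 1)
    (h₂ : hammingDist y c₂ ≤ (t + 1) ^ m - 1) :
    c₁ = c₂ :=
  statement14_general F q m s hq hs t ht c₁ c₂ y hc₁ hc₂ h₁ h₂
end
end
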